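/- Conversely, if G is a connected undirected signed graph in which every cycle is positive, then the vertices of G can be two-colored so that positive edges join like-colored vertices and negative edges join unlike-colored vertices. -/

import Mathlib

/-!
Count the negative edges of a walk modulo 2. Shortening a walk to a path (`Walk.bypass`) only
cuts off closed subwalks `cons h q` with `q` a path, and such a walk is either a cycle or a
single edge traversed twice; in a balanced graph both have even count, so every closed walk does,
and any two walks with the same endpoints have counts of the same parity. Colouring each vertex
by this parity for walks from a fixed vertex of its component gives the required colouring.
-/

namespace SimpleGraph

variable {V : Type*} {G : SimpleGraph V} {neg : Sym2 V → Bool}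

def IsBalanced (G : SimpleGraph V) (neg : Sym2 V → Bool) : Prop :=
  ∀ (v : V) (c : G.Walk v v), c.IsCycle → Even (c.edges.countP neg)

namespace IsBalanced

open Walk

theorem even_countP_edges_cons_of_isPath (hG : G.IsBalanced neg) {u v : V} (h : G.Adj u v)
    {q : G.Walk v u} (hq : q.IsPath) : Even ((cons h q).edges.countP neg) := by
  by_cases he : s(u, v) ∈ q.edges
  swap
  · exact hG u _ ((cons_isCycle_iff q h).2 ⟨hq, he⟩)
  cases q with
  | nil => simp at he
  | @cons _ y _ h' q =>
    rw [cons_isPath_iff] at hq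
    rcases List.mem_cons.1 he with he | he
    · obtain rfl : u = y := by
        rcases Sym2.eq_iff.1 he with ⟨rfl, -⟩ | ⟨rfl, -⟩
        · exact absurd h (G.loopless.irrefl u)
        · rfl
      obtain rfl := eq_nil_iff_nil.2 (isPath_iff_nil.1 hq.1)
      cases hneg : neg s(u, v) <;> simp [Sym2.eq_swap, hneg]
    · exact absurd (q.snd_mem_support_of_mem_edges he) hq.2

theorem even_countP_edges_bypass_iff [DecidableEq V] (hG : G.IsBalanced neg) {u v : V}
    (w : G.Walk u v) : Even (w.bypass.edges.countP neg) ↔ Even (w.edges.countP neg) := by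
  induction w with
  | nil => rfl
  | @cons u v w h p ih =>
    rw [bypass]
    split_ifs with hs
    · have hcycle := hG.even_countP_edges_cons_of_isPath h (p.bypass_isPath.takeUntil hs)
      have hsplit := congrArg (fun q => q.edges.countP neg) (p.bypass.take_spec hs)
      simp only [edges_append, List.countP_append, edges_cons, List.countP_cons] at hsplit hcycle ⊢
      rw [Nat.even_add, ← ih, ← hsplit]
      simp only [Nat.even_add] at hcycle ⊢
      tauto
    · simp only [edges_cons, List.countP_cons, Nat.even_add, ih]

theorem even_countP_edges (hG : G.IsBalanced neg) {u : V} (c : G.Walk u u) :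
    Even (c.edges.countP neg) := by
  classical
  rw [← hG.even_countP_edges_bypass_iff, eq_nil_iff_nil.2 (isPath_iff_nil.1 c.bypass_isPath)]
  simp

theorem even_countP_edges_iff (hG : G.IsBalanced neg) {u v : V} (p q : G.Walk u v) :
    Even (p.edges.countP neg) ↔ Even (q.edges.countP neg) := by
  simpa [List.countP_append, Nat.even_add] using hG.even_countP_edges (p.append q.reverse)

theorem exists_coloring (hG : G.IsBalanced neg) :
    ∃ f : V → Bool, ∀ u v, G.Adj u v → (neg s(u, v) = false ↔ f u = f v) := by
  let root (v : V) : V := (G.connectedComponentMk v).out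
  have reach (v : V) : G.Reachable (root v) v := ConnectedComponent.exact (Quot.out_eq _)
  refine ⟨fun v => decide (Even ((reach v).some.edges.countP neg)), fun u v h => ?_⟩
  have hroot : root u = root v :=
    congrArg Quot.out (ConnectedComponent.connectedComponentMk_eq_of_adj h)
  have hparity :=
    hG.even_countP_edges_iff ((reach u).some.concat h) ((reach v).some.copy hroot.symm rfl)
  simp only [edges_concat, edges_copy, List.concat_eq_append, List.countP_append,
    List.countP_singleton, Nat.even_add] at hparity
  cases hneg : neg s(u, v) <;>
    simp only [hneg, ↓reduceIte, Even.zero, Nat.not_even_one, iff_true, iff_false, true_iff,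
      false_iff, Bool.false_eq_true, Bool.true_eq_false, decide_eq_decide] at hparity ⊢ <;>
    tauto

end IsBalanced

end SimpleGraph

theorem stmt_14_general {V : Type*} (G : SimpleGraph V) (σ : Sym2 V → ℤ)
    (hσ : ∀ e ∈ G.edgeSet, σ e = 1 ∨ σ e = -1)
    (hbal : ∀ (v : V) (w : G.Walk v v), w.IsCycle →
      Even (w.edges.countP (fun e => decide (σ e = -1)))) :
    ∃ f : V → Bool, ∀ u v, G.Adj u v → (σ s(u, v) = 1 ↔ f u = f v) := by
  obtain ⟨f, hf⟩ := SimpleGraph.IsBalanced.exists_coloring hbal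
  refine ⟨f, fun u v h => ?_⟩
  rw [← hf u v h, decide_eq_false_iff_not]
  rcases hσ s(u, v) h with hpos | hneg <;> simp [*]

/-- Harary's balance theorem (converse direction): if G is a connected undirected signed
graph in which every cycle has an even number of negative edges, then the vertices can be
two-colored so that positive edges join like-colored vertices and negative edges join
unlike-colored vertices. -/
theorem stmt_14 {V : Type*} (G : SimpleGraph V) (σ : Sym2 V → ℤ)
    (hσ : ∀ e ∈ G.edgeSet, σ e = 1 ∨ σ e = -1)
    (hconn : G.Connected)
    (hbal : ∀ (v : V) (w : G.Walk v v), w.IsCycle →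
      Even (w.edges.countP (fun e => decide (σ e = -1)))) :
    ∃ f : V → Bool, ∀ u v, G.Adj u v → (σ s(u, v) = 1 ↔ f u = f v) :=
  stmt_14_general G σ hσ hbal
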